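/- arXiv:math/0612501 — 3 statements merged into one kernel-verified Lean document; each statement's English description precedes it below -/
import Mathlib

section
/- Along every Hamiltonian flow line of P the momenta τ and q_φ are constant (so the energy E := τ and the angular momentum L := −q_φ are constants of motion), p := 2P is constant, and the Carter constant K := q_θ² + 𝐃²/sin²θ + p·a²·cos²θ is constant along the flow line; moreover at every point of the flow line one has the second expression K = 𝐏²/Δ − Δ·ξ² − p·r². -/
/-!
`P` depends on neither `t` nor `φ`, so `τ` and `q_φ` are constant. With `E` and `L` frozen,
away from the horizons and the axis `2ρ²P = (𝐏²/Δ − Δξ²) − (q_θ² + 𝐃²/sin²θ)`, so `(r, ξ; θ, q_θ)`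
moves under a Liouville Hamiltonian `H = (N₁(x₁, y₁) + N₂(x₂, y₂)) / (2 (F₁ x₁ + F₂ x₂))` with
`Nᵢ = fᵢ(xᵢ) − hᵢ(xᵢ) yᵢ²`, `F₁ = r²`, `F₂ = a²cos²θ`. Hamilton's equations give
`Nᵢ' = 2H · (Fᵢ ∘ xᵢ)'` for each `i` separately; adding them, `(2H ρ²)' = 2H (ρ²)'`, so `H` is
constant, and then so is `N₁ − 2H F₁(x₁) = −N₂ + 2H F₂(x₂)`. This is Carter's constant, and its two
expressions are the two formulas for `K`.
-/

noncomputable section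
open Real Set

namespace Stmt0

/-- `Δ(r) = r² − 2Mr + a² + Q²`. -/
def Δ (M a Q r : ℝ) : ℝ := r ^ 2 - 2 * M * r + a ^ 2 + Q ^ 2

/-- Outer horizon `r₊ = M + √(M² − (a² + Q²))`. -/
def rplus (M a Q : ℝ) : ℝ := M + Real.sqrt (M ^ 2 - (a ^ 2 + Q ^ 2))

/-- `ρ²(r,θ) = r² + a²cos²θ`. -/
def rho2 (a r θ : ℝ) : ℝ := r ^ 2 + a ^ 2 * Real.cos θ ^ 2

/-- `σ²(r,θ) = (r²+a²)² − a²Δ(r)sin²θ`. -/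
def sigma2 (M a Q r θ : ℝ) : ℝ :=
  (r ^ 2 + a ^ 2) ^ 2 - a ^ 2 * Δ M a Q r * Real.sin θ ^ 2

/-- The Hamiltonian `P`, the principal symbol of half the d'Alembertian of the
Kerr–Newman metric on block I. -/
def P (M a Q : ℝ) (_t r θ _φ τ ξ qθ qφ : ℝ) : ℝ :=
  (1 / (2 * rho2 a r θ)) *
    ((sigma2 M a Q r θ / Δ M a Q r) * τ ^ 2
      - (2 * a * (Q ^ 2 - 2 * M * r) / Δ M a Q r) * qφ * τ
      - ((Δ M a Q r - a ^ 2 * Real.sin θ ^ 2) / (Δ M a Q r * Real.sin θ ^ 2)) * qφ ^ 2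
      - Δ M a Q r * ξ ^ 2 - qθ ^ 2)

/-- A Hamiltonian flow line of `P` in block I : a `C¹` curve
`s ↦ (t,r,θ,φ;τ,ξ,q_θ,q_φ)(s)` with `r(s) > r₊` and `0 < θ(s) < π` satisfying
Hamilton's equations `dx/ds = ∂P/∂p`, `dp/ds = −∂P/∂x`. -/
structure FlowLine (M a Q : ℝ) where
  t : ℝ → ℝ
  r : ℝ → ℝ
  θ : ℝ → ℝ
  φ : ℝ → ℝ
  τ : ℝ → ℝ
  ξ : ℝ → ℝ
  qθ : ℝ → ℝ
  qφ : ℝ → ℝ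
  hr : ∀ s, rplus M a Q < r s
  hθ : ∀ s, θ s ∈ Set.Ioo 0 Real.pi
  eq_t : ∀ s, HasDerivAt t
    (deriv (fun u => P M a Q (t s) (r s) (θ s) (φ s) u (ξ s) (qθ s) (qφ s)) (τ s)) s
  eq_r : ∀ s, HasDerivAt r
    (deriv (fun u => P M a Q (t s) (r s) (θ s) (φ s) (τ s) u (qθ s) (qφ s)) (ξ s)) s
  eq_θ : ∀ s, HasDerivAt θ
    (deriv (fun u => P M a Q (t s) (r s) (θ s) (φ s) (τ s) (ξ s) u (qφ s)) (qθ s)) s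
  eq_φ : ∀ s, HasDerivAt φ
    (deriv (fun u => P M a Q (t s) (r s) (θ s) (φ s) (τ s) (ξ s) (qθ s) u) (qφ s)) s
  eq_τ : ∀ s, HasDerivAt τ
    (-deriv (fun u => P M a Q u (r s) (θ s) (φ s) (τ s) (ξ s) (qθ s) (qφ s)) (t s)) s
  eq_ξ : ∀ s, HasDerivAt ξ
    (-deriv (fun u => P M a Q (t s) u (θ s) (φ s) (τ s) (ξ s) (qθ s) (qφ s)) (r s)) s
  eq_qθ : ∀ s, HasDerivAt qθ
    (-deriv (fun u => P M a Q (t s) (r s) u (φ s) (τ s) (ξ s) (qθ s) (qφ s)) (θ s)) s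
  eq_qφ : ∀ s, HasDerivAt qφ
    (-deriv (fun u => P M a Q (t s) (r s) (θ s) u (τ s) (ξ s) (qθ s) (qφ s)) (φ s)) s

/-- `p := 2P` evaluated along the flow line. -/
def pval (M a Q : ℝ) (γ : FlowLine M a Q) (s : ℝ) : ℝ :=
  2 * P M a Q (γ.t s) (γ.r s) (γ.θ s) (γ.φ s) (γ.τ s) (γ.ξ s) (γ.qθ s) (γ.qφ s)

/-- `𝐃 := L − aE sin²θ` evaluated along the flow line (with `E = τ`, `L = −q_φ`). -/
def Dd (M a Q : ℝ) (γ : FlowLine M a Q) (s : ℝ) : ℝ :=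
  (-γ.qφ s) - a * γ.τ s * Real.sin (γ.θ s) ^ 2

/-- `𝐏 := (r²+a²)E − aL` evaluated along the flow line. -/
def Pb (M a Q : ℝ) (γ : FlowLine M a Q) (s : ℝ) : ℝ :=
  ((γ.r s) ^ 2 + a ^ 2) * γ.τ s - a * (-γ.qφ s)

/-- The Carter constant `K = q_θ² + 𝐃²/sin²θ + p a² cos²θ` along the flow line. -/
def Kc (M a Q : ℝ) (γ : FlowLine M a Q) (s : ℝ) : ℝ :=
  (γ.qθ s) ^ 2 + (Dd M a Q γ s) ^ 2 / Real.sin (γ.θ s) ^ 2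
    + pval M a Q γ s * a ^ 2 * Real.cos (γ.θ s) ^ 2

end Stmt0

theorem eq_of_hasDerivAt_zero {f : ℝ → ℝ} (hf : ∀ x, HasDerivAt f 0 x) (x y : ℝ) :
    f x = f y :=
  is_const_of_deriv_eq_zero (fun x => (hf x).differentiableAt) (fun x => (hf x).deriv) x y

theorem hasDerivAt_zero_of_mul_eq {p N G : ℝ → ℝ} {G' s : ℝ} (hpN : ∀ x, p x * G x = N x)
    (hG : ∀ x, G x ≠ 0) (hN : HasDerivAt N (p s * G') s) (hGd : HasDerivAt G G' s) :
    HasDerivAt p 0 s := by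
  have hp : p = fun x => N x / G x :=
    funext fun x => by rw [← hpN x, mul_div_cancel_right₀ _ (hG x)]
  subst hp
  refine (hN.div hGd (hG s)).congr_deriv ?_
  rw [← hpN s]
  ring

namespace Liouville

structure System where
  f₁ : ℝ → ℝ
  h₁ : ℝ → ℝ
  F₁ : ℝ → ℝ
  f₂ : ℝ → ℝ
  h₂ : ℝ → ℝ
  F₂ : ℝ → ℝ

def sepEnergy (f h : ℝ → ℝ) (x y : ℝ) : ℝ := f x - h x * y ^ 2

namespace System

variable (S : System)

def H (x₁ y₁ x₂ y₂ : ℝ) : ℝ :=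
  (sepEnergy S.f₁ S.h₁ x₁ y₁ + sepEnergy S.f₂ S.h₂ x₂ y₂) / (2 * (S.F₁ x₁ + S.F₂ x₂))

def separationConstant (x₁ y₁ x₂ y₂ : ℝ) : ℝ :=
  sepEnergy S.f₁ S.h₁ x₁ y₁ - 2 * S.H x₁ y₁ x₂ y₂ * S.F₁ x₁

def swap : System := ⟨S.f₂, S.h₂, S.F₂, S.f₁, S.h₁, S.F₁⟩

theorem swap_H (x₁ y₁ x₂ y₂ : ℝ) : S.swap.H x₂ y₂ x₁ y₁ = S.H x₁ y₁ x₂ y₂ := by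
  simp only [H, swap, add_comm]

theorem separationConstant_eq_snd {x₁ y₁ x₂ y₂ : ℝ} (hρ : S.F₁ x₁ + S.F₂ x₂ ≠ 0) :
    S.separationConstant x₁ y₁ x₂ y₂ =
      -sepEnergy S.f₂ S.h₂ x₂ y₂ + 2 * S.H x₁ y₁ x₂ y₂ * S.F₂ x₂ := by
  simp only [separationConstant, H]
  field_simp
  ring

theorem hasDerivAt_H_x₁ {x₁ y₁ x₂ y₂ f₁' h₁' F₁' : ℝ} (hf : HasDerivAt S.f₁ f₁' x₁)
    (hh : HasDerivAt S.h₁ h₁' x₁) (hF : HasDerivAt S.F₁ F₁' x₁)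
    (hρ : S.F₁ x₁ + S.F₂ x₂ ≠ 0) :
    HasDerivAt (fun u => S.H u y₁ x₂ y₂)
      ((f₁' - h₁' * y₁ ^ 2 - 2 * S.H x₁ y₁ x₂ y₂ * F₁') / (2 * (S.F₁ x₁ + S.F₂ x₂))) x₁ := by
  have hnum := (hf.sub (hh.mul_const (y₁ ^ 2))).add_const (sepEnergy S.f₂ S.h₂ x₂ y₂)
  have hden := (hF.add_const (S.F₂ x₂)).const_mul 2
  refine (hnum.div hden (mul_ne_zero two_ne_zero hρ)).congr_deriv ?_
  simp only [H, sepEnergy, Pi.sub_apply]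
  field_simp

theorem hasDerivAt_H_y₁ (x₁ y₁ x₂ y₂ : ℝ) :
    HasDerivAt (fun v => S.H x₁ v x₂ y₂) (-(S.h₁ x₁ * y₁) / (S.F₁ x₁ + S.F₂ x₂)) y₁ := by
  have h := (((hasDerivAt_pow 2 y₁).const_mul (S.h₁ x₁)).const_sub (S.f₁ x₁)).add_const
    (sepEnergy S.f₂ S.h₂ x₂ y₂) |>.div_const (2 * (S.F₁ x₁ + S.F₂ x₂))
  refine h.congr_deriv ?_
  generalize S.F₁ x₁ + S.F₂ x₂ = ρ
  push_cast
  ring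

structure RegularAt (x₁ x₂ : ℝ) : Prop where
  differentiableAt_f₁ : DifferentiableAt ℝ S.f₁ x₁
  differentiableAt_h₁ : DifferentiableAt ℝ S.h₁ x₁
  differentiableAt_F₁ : DifferentiableAt ℝ S.F₁ x₁
  differentiableAt_f₂ : DifferentiableAt ℝ S.f₂ x₂
  differentiableAt_h₂ : DifferentiableAt ℝ S.h₂ x₂
  differentiableAt_F₂ : DifferentiableAt ℝ S.F₂ x₂
  ne_zero : S.F₁ x₁ + S.F₂ x₂ ≠ 0

theorem RegularAt.swap {S : System} {x₁ x₂ : ℝ} (h : S.RegularAt x₁ x₂) :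
    S.swap.RegularAt x₂ x₁ :=
  ⟨h.differentiableAt_f₂, h.differentiableAt_h₂, h.differentiableAt_F₂, h.differentiableAt_f₁,
    h.differentiableAt_h₁, h.differentiableAt_F₁, by rw [add_comm]; exact h.ne_zero⟩

structure IsFlowLine (X₁ Y₁ X₂ Y₂ : ℝ → ℝ) : Prop where
  eq_X₁ : ∀ s, HasDerivAt X₁ (deriv (fun v => S.H (X₁ s) v (X₂ s) (Y₂ s)) (Y₁ s)) s
  eq_Y₁ : ∀ s, HasDerivAt Y₁ (-deriv (fun u => S.H u (Y₁ s) (X₂ s) (Y₂ s)) (X₁ s)) s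
  eq_X₂ : ∀ s, HasDerivAt X₂ (deriv (fun v => S.H (X₁ s) (Y₁ s) (X₂ s) v) (Y₂ s)) s
  eq_Y₂ : ∀ s, HasDerivAt Y₂ (-deriv (fun u => S.H (X₁ s) (Y₁ s) u (Y₂ s)) (X₂ s)) s

variable {S} {X₁ Y₁ X₂ Y₂ : ℝ → ℝ}

theorem IsFlowLine.swap (hS : S.IsFlowLine X₁ Y₁ X₂ Y₂) : S.swap.IsFlowLine X₂ Y₂ X₁ Y₁ := by
  constructor <;> intro s <;> simp only [swap_H]
  exacts [hS.eq_X₂ s, hS.eq_Y₂ s, hS.eq_X₁ s, hS.eq_Y₁ s]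

theorem IsFlowLine.hasDerivAt_X₁ (hS : S.IsFlowLine X₁ Y₁ X₂ Y₂) (s : ℝ) :
    HasDerivAt X₁ (-(S.h₁ (X₁ s) * Y₁ s) / (S.F₁ (X₁ s) + S.F₂ (X₂ s))) s := by
  simpa only [(S.hasDerivAt_H_y₁ _ _ _ _).deriv] using hS.eq_X₁ s

theorem IsFlowLine.hasDerivAt_sepEnergy₁ (hS : S.IsFlowLine X₁ Y₁ X₂ Y₂) {s : ℝ}
    (hreg : S.RegularAt (X₁ s) (X₂ s)) :
    HasDerivAt (fun s => sepEnergy S.f₁ S.h₁ (X₁ s) (Y₁ s))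
      (2 * S.H (X₁ s) (Y₁ s) (X₂ s) (Y₂ s) *
        (deriv S.F₁ (X₁ s) * (-(S.h₁ (X₁ s) * Y₁ s) / (S.F₁ (X₁ s) + S.F₂ (X₂ s))))) s := by
  have hf := hreg.differentiableAt_f₁.hasDerivAt
  have hh := hreg.differentiableAt_h₁.hasDerivAt
  have hX := hS.hasDerivAt_X₁ s
  have hY := hS.eq_Y₁ s
  rw [(S.hasDerivAt_H_x₁ hf hh hreg.differentiableAt_F₁.hasDerivAt hreg.ne_zero).deriv] at hY
  refine ((hf.comp s hX).sub ((hh.comp s hX).mul (hY.pow 2))).congr_deriv ?_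
  have hρ := hreg.ne_zero
  simp only [Function.comp_def, Pi.pow_apply]
  field_simp
  ring

theorem IsFlowLine.hasDerivAt_H_zero (hS : S.IsFlowLine X₁ Y₁ X₂ Y₂)
    (hreg : ∀ s, S.RegularAt (X₁ s) (X₂ s)) (s : ℝ) :
    HasDerivAt (fun s => S.H (X₁ s) (Y₁ s) (X₂ s) (Y₂ s)) 0 s := by
  have hρ x := (hreg x).ne_zero
  have hX₁ := hS.hasDerivAt_X₁ s
  have hX₂ := hS.swap.hasDerivAt_X₁ s
  have hN₁ := hS.hasDerivAt_sepEnergy₁ (hreg s)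
  have hN₂ := hS.swap.hasDerivAt_sepEnergy₁ (hreg s).swap
  have hF₁ := (hreg s).differentiableAt_F₁.hasDerivAt.comp s hX₁
  have hF₂ := (hreg s).differentiableAt_F₂.hasDerivAt.comp s hX₂
  simp only [swap_H] at hX₂ hN₂ hF₂
  dsimp only [System.swap] at hX₂ hN₂ hF₂
  refine hasDerivAt_zero_of_mul_eq (fun x => ?_) (fun x => mul_ne_zero two_ne_zero (hρ x))
    ((hN₁.add hN₂).congr_deriv ?_) ((hF₁.add hF₂).const_mul 2)
  · have := hρ x
    simp only [H, Pi.add_apply]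
    field_simp
  · ring

theorem IsFlowLine.H_eq (hS : S.IsFlowLine X₁ Y₁ X₂ Y₂)
    (hreg : ∀ s, S.RegularAt (X₁ s) (X₂ s)) (s s' : ℝ) :
    S.H (X₁ s) (Y₁ s) (X₂ s) (Y₂ s) = S.H (X₁ s') (Y₁ s') (X₂ s') (Y₂ s') :=
  eq_of_hasDerivAt_zero (hS.hasDerivAt_H_zero hreg) s s'

theorem IsFlowLine.hasDerivAt_separationConstant_zero (hS : S.IsFlowLine X₁ Y₁ X₂ Y₂)
    (hreg : ∀ s, S.RegularAt (X₁ s) (X₂ s)) (s : ℝ) :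
    HasDerivAt (fun s => S.separationConstant (X₁ s) (Y₁ s) (X₂ s) (Y₂ s)) 0 s := by
  have hN₁ := hS.hasDerivAt_sepEnergy₁ (hreg s)
  have hF₁ := (hreg s).differentiableAt_F₁.hasDerivAt.comp s (hS.hasDerivAt_X₁ s)
  refine (hN₁.sub (((hS.hasDerivAt_H_zero hreg s).const_mul 2).mul hF₁)).congr_deriv ?_
  ring

theorem IsFlowLine.separationConstant_eq (hS : S.IsFlowLine X₁ Y₁ X₂ Y₂)
    (hreg : ∀ s, S.RegularAt (X₁ s) (X₂ s)) (s s' : ℝ) :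
    S.separationConstant (X₁ s) (Y₁ s) (X₂ s) (Y₂ s) =
      S.separationConstant (X₁ s') (Y₁ s') (X₂ s') (Y₂ s') :=
  eq_of_hasDerivAt_zero (hS.hasDerivAt_separationConstant_zero hreg) s s'

end System

end Liouville

namespace Stmt0

open scoped Topology

def radialPotential (M a Q E L r : ℝ) : ℝ := ((r ^ 2 + a ^ 2) * E - a * L) ^ 2 / Δ M a Q r

def angularPotential (a E L θ : ℝ) : ℝ := -((L - a * E * sin θ ^ 2) ^ 2 / sin θ ^ 2)

def carterSystem (M a Q E L : ℝ) : Liouville.System :=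
  ⟨radialPotential M a Q E L, Δ M a Q, fun r => r ^ 2,
    angularPotential a E L, fun _ => 1, fun θ => a ^ 2 * cos θ ^ 2⟩

theorem P_eq_carterSystem_H {M a Q t r θ φ τ ξ qθ qφ : ℝ} (hΔ : Δ M a Q r ≠ 0)
    (hθ : sin θ ≠ 0) :
    P M a Q t r θ φ τ ξ qθ qφ = (carterSystem M a Q τ (-qφ)).H r ξ θ qθ := by
  simp only [P, Liouville.System.H, carterSystem, radialPotential, angularPotential,
    Liouville.sepEnergy, rho2, sigma2, one_div_mul_eq_div]
  congr 1
  field_simp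
  unfold Δ
  ring

theorem carterSystem_regularAt {M a Q E L r θ : ℝ} (hΔ : Δ M a Q r ≠ 0) (hθ : sin θ ≠ 0)
    (hρ : rho2 a r θ ≠ 0) : (carterSystem M a Q E L).RegularAt r θ where
  differentiableAt_f₁ := by
    dsimp only [carterSystem]
    unfold radialPotential Δ at *
    fun_prop (disch := exact hΔ)
  differentiableAt_h₁ := by dsimp only [carterSystem]; unfold Δ; fun_prop
  differentiableAt_F₁ := by fun_prop
  differentiableAt_f₂ := by
    dsimp only [carterSystem]
    unfold angularPotential
    fun_prop (disch := exact pow_ne_zero 2 hθ)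
  differentiableAt_h₂ := by fun_prop
  differentiableAt_F₂ := by fun_prop
  ne_zero := hρ

namespace FlowLine

variable {M a Q : ℝ} (γ : FlowLine M a Q)

theorem hasDerivAt_τ (s : ℝ) : HasDerivAt γ.τ 0 s := by
  simpa only [P, deriv_const', neg_zero] using γ.eq_τ s

theorem hasDerivAt_qφ (s : ℝ) : HasDerivAt γ.qφ 0 s := by
  simpa only [P, deriv_const', neg_zero] using γ.eq_qφ s

theorem τ_eq (s : ℝ) : γ.τ s = γ.τ 0 := eq_of_hasDerivAt_zero γ.hasDerivAt_τ s 0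

theorem qφ_eq (s : ℝ) : γ.qφ s = γ.qφ 0 := eq_of_hasDerivAt_zero γ.hasDerivAt_qφ s 0

theorem Δ_pos (s : ℝ) : 0 < Δ M a Q (γ.r s) := by
  have hr := γ.hr s
  rw [rplus, ← lt_sub_iff_add_lt'] at hr
  have hD := (Real.sqrt_lt' ((Real.sqrt_nonneg _).trans_lt hr)).1 hr
  unfold Δ
  nlinarith

theorem r_pos (hM : 0 < M) (s : ℝ) : 0 < γ.r s :=
  hM.trans_le ((le_add_of_nonneg_right (Real.sqrt_nonneg _)).trans (γ.hr s).le)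

theorem sin_pos (s : ℝ) : 0 < sin (γ.θ s) := sin_pos_of_pos_of_lt_pi (γ.hθ s).1 (γ.hθ s).2

theorem rho2_pos (hM : 0 < M) (s : ℝ) : 0 < rho2 a (γ.r s) (γ.θ s) := by
  have := γ.r_pos hM s
  unfold rho2
  positivity

theorem P_eq_H {s r θ : ℝ} (hΔ : Δ M a Q r ≠ 0) (hθ : sin θ ≠ 0) (ξ qθ : ℝ) :
    P M a Q (γ.t s) r θ (γ.φ s) (γ.τ s) ξ qθ (γ.qφ s) =
      (carterSystem M a Q (γ.τ 0) (-γ.qφ 0)).H r ξ θ qθ := by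
  rw [P_eq_carterSystem_H hΔ hθ, γ.τ_eq, γ.qφ_eq]

theorem isFlowLine : (carterSystem M a Q (γ.τ 0) (-γ.qφ 0)).IsFlowLine γ.r γ.ξ γ.θ γ.qθ where
  eq_X₁ s := by
    simpa only [γ.P_eq_H (γ.Δ_pos s).ne' (γ.sin_pos s).ne'] using γ.eq_r s
  eq_Y₁ s := by
    have hcont : Continuous (Δ M a Q) := by unfold Δ; fun_prop
    have h : (fun u => P M a Q (γ.t s) u (γ.θ s) (γ.φ s) (γ.τ s) (γ.ξ s) (γ.qθ s) (γ.qφ s))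
        =ᶠ[𝓝 (γ.r s)]
          fun u => (carterSystem M a Q (γ.τ 0) (-γ.qφ 0)).H u (γ.ξ s) (γ.θ s) (γ.qθ s) :=
      (hcont.continuousAt.eventually_ne (γ.Δ_pos s).ne').mono fun u hu =>
        γ.P_eq_H hu (γ.sin_pos s).ne' _ _
    simpa only [h.deriv_eq] using γ.eq_ξ s
  eq_X₂ s := by
    simpa only [γ.P_eq_H (γ.Δ_pos s).ne' (γ.sin_pos s).ne'] using γ.eq_θ s
  eq_Y₂ s := by
    have h : (fun u => P M a Q (γ.t s) (γ.r s) u (γ.φ s) (γ.τ s) (γ.ξ s) (γ.qθ s) (γ.qφ s))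
        =ᶠ[𝓝 (γ.θ s)]
          fun u => (carterSystem M a Q (γ.τ 0) (-γ.qφ 0)).H (γ.r s) (γ.ξ s) u (γ.qθ s) :=
      (continuous_sin.continuousAt.eventually_ne (γ.sin_pos s).ne').mono fun u hu =>
        γ.P_eq_H (γ.Δ_pos s).ne' hu _ _
    simpa only [h.deriv_eq] using γ.eq_qθ s

theorem pval_eq (s : ℝ) :
    pval M a Q γ s =
      2 * (carterSystem M a Q (γ.τ 0) (-γ.qφ 0)).H (γ.r s) (γ.ξ s) (γ.θ s) (γ.qθ s) := by
  rw [pval, γ.P_eq_H (γ.Δ_pos s).ne' (γ.sin_pos s).ne']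

theorem Kc_eq (hM : 0 < M) (s : ℝ) :
    Kc M a Q γ s = (carterSystem M a Q (γ.τ 0) (-γ.qφ 0)).separationConstant
      (γ.r s) (γ.ξ s) (γ.θ s) (γ.qθ s) := by
  rw [(carterSystem M a Q _ _).separationConstant_eq_snd (γ.rho2_pos hM s).ne', Kc, pval_eq, Dd,
    γ.τ_eq, γ.qφ_eq]
  simp only [carterSystem, angularPotential, Liouville.sepEnergy]
  ring

end FlowLine

theorem carter_constants_of_motion_general (M a Q : ℝ) (hM : 0 < M)
    (γ : FlowLine M a Q) :
    (∀ s s' : ℝ, γ.τ s = γ.τ s') ∧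
    (∀ s s' : ℝ, γ.qφ s = γ.qφ s') ∧
    (∀ s s' : ℝ, pval M a Q γ s = pval M a Q γ s') ∧
    (∀ s s' : ℝ, Kc M a Q γ s = Kc M a Q γ s') ∧
    (∀ s : ℝ, Kc M a Q γ s =
      (Pb M a Q γ s) ^ 2 / Δ M a Q (γ.r s) - Δ M a Q (γ.r s) * (γ.ξ s) ^ 2
        - pval M a Q γ s * (γ.r s) ^ 2) := by
  have hreg s : (carterSystem M a Q (γ.τ 0) (-γ.qφ 0)).RegularAt (γ.r s) (γ.θ s) :=
    carterSystem_regularAt (γ.Δ_pos s).ne' (γ.sin_pos s).ne' (γ.rho2_pos hM s).ne'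
  refine ⟨fun s s' => by rw [γ.τ_eq s, γ.τ_eq s'], fun s s' => by rw [γ.qφ_eq s, γ.qφ_eq s'],
    fun s s' => by rw [γ.pval_eq, γ.pval_eq, γ.isFlowLine.H_eq hreg s s'],
    fun s s' => by rw [γ.Kc_eq hM, γ.Kc_eq hM, γ.isFlowLine.separationConstant_eq hreg s s'],
    fun s => ?_⟩
  rw [γ.Kc_eq hM, γ.pval_eq, Pb, γ.τ_eq s, γ.qφ_eq s]
  rfl

/-- constants of motion along Hamiltonian flow lines, and the two
expressions of the Carter constant. -/
theorem carter_constants_of_motion (M a Q : ℝ) (hM : 0 < M) (ha : 0 < a)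
    (hsub : a ^ 2 + Q ^ 2 < M ^ 2) (γ : FlowLine M a Q) :
    (∀ s s' : ℝ, γ.τ s = γ.τ s') ∧
    (∀ s s' : ℝ, γ.qφ s = γ.qφ s') ∧
    (∀ s s' : ℝ, pval M a Q γ s = pval M a Q γ s') ∧
    (∀ s s' : ℝ, Kc M a Q γ s = Kc M a Q γ s') ∧
    (∀ s : ℝ, Kc M a Q γ s =
      (Pb M a Q γ s) ^ 2 / Δ M a Q (γ.r s) - Δ M a Q (γ.r s) * (γ.ξ s) ^ 2
        - pval M a Q γ s * (γ.r s) ^ 2) :=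
  carter_constants_of_motion_general M a Q hM γ

end Stmt0
end
end

section
/- For each θ ∈ [0,π] the map t ↦ ẑ(t,θ) + t is a strictly increasing bijection from [0,∞) onto [ẑ(0,θ), 0); let τ̂(x₀,θ) denote its inverse, defined for ẑ(0,θ) ≤ x₀ < 0. Then there exist constants C > 0 and x̄ < 0 such that for all θ ∈ [0,π] and all x̄ < x₀ < 0: |τ̂(x₀,θ) + (1/(2κ₊))·ln(−x₀) − (1/(2κ₊))·ln Â(θ)| ≤ C·|x₀| and |1 + ∂_tẑ(τ̂(x₀,θ),θ) + 2κ₊·x₀| ≤ C·x₀²; that is, uniformly in θ as x₀ → 0⁻, τ̂(x₀,θ) = −(1/(2κ₊))ln(−x₀) + (1/(2κ₊))ln Â(θ) + O(x₀) and 1 + ∂_tẑ(τ̂(x₀,θ),θ) = −2κ₊·x₀ + O(x₀²). -/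
/-!
STATEMENT 8 (asymptotics of the retarded time `τ̂` of the collapse boundary).

For each `θ ∈ [0,π]` the map `t ↦ ẑ(t,θ) + t` is a strictly increasing
bijection from `[0,∞)` onto `[ẑ(0,θ), 0)`; let `τ̂(x₀,θ)` denote its inverse.
Then there exist constants `C > 0` and `x̄ < 0` such that for all `θ ∈ [0,π]`
and all `x̄ < x₀ < 0` :
`|τ̂(x₀,θ) + (1/(2κ₊))ln(−x₀) − (1/(2κ₊))ln Â(θ)| ≤ C·|x₀|` and
`|1 + ∂_tẑ(τ̂(x₀,θ),θ) + 2κ₊·x₀| ≤ C·x₀²`; that is, uniformly in `θ` as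
`x₀ → 0⁻`, `τ̂(x₀,θ) = −(1/(2κ₊))ln(−x₀) + (1/(2κ₊))ln Â(θ) + O(x₀)` and
`1 + ∂_tẑ(τ̂(x₀,θ),θ) = −2κ₊·x₀ + O(x₀²)`.
-/

noncomputable section
open Real Set

namespace Stmt8

/-- Logs of two positive numbers bounded below by `d > 0` are close if the
numbers are close. -/
lemma log_close {a b d e : ℝ} (ha : 0 < a) (hb : 0 < b) (hd : 0 < d)
    (hda : d ≤ a) (hdb : d ≤ b) (he : |a - b| ≤ e) :
    |Real.log a - Real.log b| ≤ e / d := by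
  have key : ∀ x y : ℝ, 0 < x → 0 < y → d ≤ x →
      Real.log y - Real.log x ≤ |y - x| / d := by
    intro x y hx hy hdx
    have h1 : Real.log y - Real.log x = Real.log (y / x) := by
      rw [Real.log_div hy.ne' hx.ne']
    have h2 : Real.log (y / x) ≤ y / x - 1 := Real.log_le_sub_one_of_pos (by positivity)
    have h3 : y / x - 1 = (y - x) / x := by field_simp
    have h4 : (y - x) / x ≤ |y - x| / d :=
      div_le_div₀ (abs_nonneg _) (le_abs_self _) hd hdx
    linarith
  have hed : |a - b| / d ≤ e / d := by gcongr
  rw [abs_sub_le_iff]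
  constructor
  · have h := key b a hb ha hdb
    linarith
  · have h := key a b ha hb hda
    rw [abs_sub_comm] at h
    linarith

set_option maxHeartbeats 1000000 in
theorem tauhat_asymptotics
    (κ k0 : ℝ) (hκ : 0 < κ) (hk0 : 0 < k0)
    (z zt : ℝ → ℝ → ℝ) (A : ℝ → ℝ)
    -- ẑ is smooth on ℝ×[0,π], with time derivative ∂_tẑ = zt
    (hzsmooth : ContDiffOn ℝ (⊤ : ℕ∞) (fun p : ℝ × ℝ => z p.1 p.2)
      (Set.univ ×ˢ Set.Icc 0 Real.pi))
    (hzt : ∀ θ ∈ Set.Icc (0 : ℝ) Real.pi, ∀ t : ℝ,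
      HasDerivAt (fun t' => z t' θ) (zt t θ) t)
    -- (i) ẑ(t,θ) = ẑ(0,θ) < 0 for t ≤ 0
    (hpast : ∀ t ≤ (0 : ℝ), ∀ θ ∈ Set.Icc (0 : ℝ) Real.pi, z t θ = z 0 θ)
    (hneg : ∀ θ ∈ Set.Icc (0 : ℝ) Real.pi, z 0 θ < 0)
    -- (ii) ∂_tẑ(t,θ) < 0 for t > 0
    (hdec : ∀ t : ℝ, 0 < t → ∀ θ ∈ Set.Icc (0 : ℝ) Real.pi, zt t θ < 0)
    -- (iii) −1 < ∂_tẑ and 1 + ∂_tẑ ≥ k₀e^{−2κ₊t} for t > 0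
    (hlow : ∀ t : ℝ, 0 < t → ∀ θ ∈ Set.Icc (0 : ℝ) Real.pi,
      -1 < zt t θ ∧ k0 * Real.exp (-2 * κ * t) ≤ 1 + zt t θ)
    -- (iv) ẑ(t,θ) = −t − Â(θ)e^{−2κ₊t} + ξ̂(t,θ), Â smooth and > 0, ξ̂ = O(e^{−4κ₊t})
    (hA : ContDiffOn ℝ (⊤ : ℕ∞) A (Set.Icc 0 Real.pi))
    (hApos : ∀ θ ∈ Set.Icc (0 : ℝ) Real.pi, 0 < A θ)
    (hasym : ∃ C : ℝ, ∀ t : ℝ, 0 < t → ∀ θ ∈ Set.Icc (0 : ℝ) Real.pi,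
      |z t θ + t + A θ * Real.exp (-2 * κ * t)| ≤ C * Real.exp (-4 * κ * t) ∧
      |zt t θ + 1 - 2 * κ * A θ * Real.exp (-2 * κ * t)| ≤ C * Real.exp (-4 * κ * t))
    :
    (∀ θ ∈ Set.Icc (0 : ℝ) Real.pi,
      StrictMonoOn (fun t => z t θ + t) (Set.Ici 0) ∧
      (fun t => z t θ + t) '' Set.Ici 0 = Set.Ico (z 0 θ) 0) ∧
    ∀ τh : ℝ → ℝ → ℝ,
      (∀ θ ∈ Set.Icc (0 : ℝ) Real.pi, ∀ x0 ∈ Set.Ico (z 0 θ) (0 : ℝ),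
        0 ≤ τh x0 θ ∧ z (τh x0 θ) θ + τh x0 θ = x0) →
      ∃ C : ℝ, 0 < C ∧ ∃ xbar : ℝ, xbar < 0 ∧
        ∀ θ ∈ Set.Icc (0 : ℝ) Real.pi, ∀ x0 : ℝ, xbar < x0 → x0 < 0 →
          |τh x0 θ + (1 / (2 * κ)) * Real.log (-x0)
              - (1 / (2 * κ)) * Real.log (A θ)| ≤ C * |x0| ∧
          |1 + zt (τh x0 θ) θ + 2 * κ * x0| ≤ C * x0 ^ 2 := by
  have hπ0 : (0 : ℝ) ∈ Set.Icc (0 : ℝ) Real.pi := ⟨le_refl 0, Real.pi_pos.le⟩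
  obtain ⟨C', hC'⟩ := hasym
  set C₀ : ℝ := max C' 1 with hC₀def
  have hC₀pos : (0 : ℝ) < C₀ := lt_of_lt_of_le one_pos (le_max_right _ _)
  have hC₀ : ∀ t : ℝ, 0 < t → ∀ θ ∈ Set.Icc (0 : ℝ) Real.pi,
      |z t θ + t + A θ * Real.exp (-2 * κ * t)| ≤ C₀ * Real.exp (-4 * κ * t) ∧
      |zt t θ + 1 - 2 * κ * A θ * Real.exp (-2 * κ * t)| ≤ C₀ * Real.exp (-4 * κ * t) := by
    intro t ht θ hθ
    obtain ⟨h1, h2⟩ := hC' t ht θ hθ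
    have hle : C' * Real.exp (-4 * κ * t) ≤ C₀ * Real.exp (-4 * κ * t) :=
      mul_le_mul_of_nonneg_right (le_max_left _ _) (Real.exp_nonneg _)
    exact ⟨h1.trans hle, h2.trans hle⟩
  -- exponential decay
  have hexp : ∀ c : ℝ, 0 < c →
      Filter.Tendsto (fun t : ℝ => Real.exp (-c * t)) Filter.atTop (nhds 0) := by
    intro c hc
    have h := Real.tendsto_exp_neg_atTop_nhds_zero.comp
      (Filter.tendsto_id.const_mul_atTop hc)
    exact h.congr fun t => by simp [Function.comp]
  have hexp2 : Filter.Tendsto (fun t : ℝ => Real.exp (-2 * κ * t))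
      Filter.atTop (nhds 0) :=
    (hexp (2 * κ) (by positivity)).congr fun t => by ring_nf
  have hexp4 : Filter.Tendsto (fun t : ℝ => Real.exp (-4 * κ * t))
      Filter.atTop (nhds 0) :=
    (hexp (4 * κ) (by positivity)).congr fun t => by ring_nf
  -- derivative and continuity of t ↦ z t θ + t
  have hf' : ∀ θ ∈ Set.Icc (0 : ℝ) Real.pi, ∀ t : ℝ,
      HasDerivAt (fun t' => z t' θ + t') (zt t θ + 1) t := fun θ hθ t =>
    (hzt θ hθ t).add (hasDerivAt_id t)
  have hfc : ∀ θ ∈ Set.Icc (0 : ℝ) Real.pi, Continuous (fun t => z t θ + t) := by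
    intro θ hθ
    exact continuous_iff_continuousAt.2 fun t => (hf' θ hθ t).continuousAt
  -- strict monotonicity
  have hmono : ∀ θ ∈ Set.Icc (0 : ℝ) Real.pi,
      StrictMonoOn (fun t => z t θ + t) (Set.Ici 0) := by
    intro θ hθ
    apply strictMonoOn_of_deriv_pos (convex_Ici 0) (hfc θ hθ).continuousOn
    intro t ht
    rw [interior_Ici] at ht
    rw [(hf' θ hθ t).deriv]
    have h1 := (hlow t ht θ hθ).2
    have h2 : 0 < k0 * Real.exp (-2 * κ * t) := by positivity
    linarith
  -- limit 0 at infinity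
  have hlim : ∀ θ ∈ Set.Icc (0 : ℝ) Real.pi,
      Filter.Tendsto (fun t => z t θ + t) Filter.atTop (nhds 0) := by
    intro θ hθ
    have hlo : Filter.Tendsto
        (fun t => -(A θ) * Real.exp (-2 * κ * t) - C₀ * Real.exp (-4 * κ * t))
        Filter.atTop (nhds 0) := by
      have := (hexp2.const_mul (-(A θ))).sub (hexp4.const_mul C₀)
      simpa using this
    have hup : Filter.Tendsto
        (fun t => -(A θ) * Real.exp (-2 * κ * t) + C₀ * Real.exp (-4 * κ * t))
        Filter.atTop (nhds 0) := by
      have := (hexp2.const_mul (-(A θ))).add (hexp4.const_mul C₀)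
      simpa using this
    apply tendsto_of_tendsto_of_tendsto_of_le_of_le' hlo hup
    · filter_upwards [Filter.eventually_gt_atTop 0] with t ht
      have h := (hC₀ t ht θ hθ).1
      rw [abs_le] at h
      linarith [h.1]
    · filter_upwards [Filter.eventually_gt_atTop 0] with t ht
      have h := (hC₀ t ht θ hθ).1
      rw [abs_le] at h
      linarith [h.2]
  -- negativity
  have hflt : ∀ θ ∈ Set.Icc (0 : ℝ) Real.pi, ∀ t ∈ Set.Ici (0 : ℝ), z t θ + t < 0 := by
    intro θ hθ t ht
    have ht0 : (0 : ℝ) ≤ t := ht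
    have ht' : (t + 1) ∈ Set.Ici (0 : ℝ) := by
      simp only [Set.mem_Ici]; linarith
    have h1 : z t θ + t < z (t + 1) θ + (t + 1) := hmono θ hθ ht ht' (by linarith)
    have h2 : z (t + 1) θ + (t + 1) ≤ 0 := by
      apply ge_of_tendsto (hlim θ hθ)
      filter_upwards [Filter.eventually_ge_atTop (t + 1)] with s hs
      have hs' : s ∈ Set.Ici (0 : ℝ) := by
        simp only [Set.mem_Ici]; linarith
      exact (hmono θ hθ).monotoneOn ht' hs' hs
    linarith
  -- image
  have himg : ∀ θ ∈ Set.Icc (0 : ℝ) Real.pi,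
      (fun t => z t θ + t) '' Set.Ici 0 = Set.Ico (z 0 θ) 0 := by
    intro θ hθ
    apply Set.Subset.antisymm
    · rintro x ⟨t, ht, rfl⟩
      refine ⟨?_, hflt θ hθ t ht⟩
      have h := (hmono θ hθ).monotoneOn self_mem_Ici ht ht
      simpa using h
    · rintro x ⟨hx1, hx2⟩
      obtain ⟨T, hT1, hT2⟩ : ∃ T : ℝ, x < z T θ + T ∧ (0 : ℝ) ≤ T := by
        have h := (hlim θ hθ).eventually (eventually_gt_nhds hx2)
        exact (h.and (Filter.eventually_ge_atTop 0)).exists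
      have hsub := intermediate_value_Icc hT2 ((hfc θ hθ).continuousOn)
      have hx : x ∈ Set.Icc (z 0 θ + 0) (z T θ + T) := ⟨by simpa using hx1, hT1.le⟩
      obtain ⟨t, ht, hft⟩ := hsub hx
      exact ⟨t, ht.1, hft⟩
  -- compactness constants
  have hAcont : ContinuousOn A (Set.Icc 0 Real.pi) := hA.continuousOn
  obtain ⟨θ₁, hθ₁, hminA⟩ := isCompact_Icc.exists_isMinOn ⟨0, hπ0⟩ hAcont
  obtain ⟨θ₂, hθ₂, hmaxA⟩ := isCompact_Icc.exists_isMaxOn ⟨0, hπ0⟩ hAcont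
  set a₁ : ℝ := A θ₁ with ha₁def
  set a₂ : ℝ := A θ₂ with ha₂def
  have ha₁pos : 0 < a₁ := hApos θ₁ hθ₁
  have ha₁ : ∀ θ ∈ Set.Icc (0 : ℝ) Real.pi, a₁ ≤ A θ := fun θ hθ =>
    isMinOn_iff.mp hminA θ hθ
  have ha₂ : ∀ θ ∈ Set.Icc (0 : ℝ) Real.pi, A θ ≤ a₂ := fun θ hθ =>
    isMaxOn_iff.mp hmaxA θ hθ
  have ha₁₂ : a₁ ≤ a₂ := ha₁ θ₂ hθ₂
  have hz0cont : ContinuousOn (fun θ => z 0 θ) (Set.Icc 0 Real.pi) := by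
    have h : ContinuousOn (fun p : ℝ × ℝ => z p.1 p.2)
        (Set.univ ×ˢ Set.Icc 0 Real.pi) := hzsmooth.continuousOn
    exact h.comp (Continuous.continuousOn (continuous_const.prodMk continuous_id))
      (fun θ hθ => ⟨Set.mem_univ _, hθ⟩)
  obtain ⟨θ₃, hθ₃, hzmax⟩ := isCompact_Icc.exists_isMaxOn ⟨0, hπ0⟩ hz0cont
  set m : ℝ := z 0 θ₃ with hmdef
  have hmneg : m < 0 := hneg θ₃ hθ₃
  have hzm : ∀ θ ∈ Set.Icc (0 : ℝ) Real.pi, z 0 θ ≤ m := fun θ hθ =>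
    isMaxOn_iff.mp hzmax θ hθ
  -- threshold time T₀
  obtain ⟨T₀, hT₀pos, hT₀⟩ : ∃ T₀ : ℝ, 0 < T₀ ∧ C₀ * Real.exp (-2 * κ * T₀) ≤ a₁ / 2 := by
    have hev : ∀ᶠ t in Filter.atTop, Real.exp (-2 * κ * t) ≤ a₁ / 2 / C₀ :=
      hexp2.eventually (eventually_le_nhds (by positivity))
    obtain ⟨T₀, h1, h2''⟩ := (hev.and (Filter.eventually_gt_atTop 0)).exists
    refine ⟨T₀, h2'', ?_⟩
    have h3 := mul_le_mul_of_nonneg_left h1 hC₀pos.le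
    calc C₀ * Real.exp (-2 * κ * T₀) ≤ C₀ * (a₁ / 2 / C₀) := h3
      _ = a₁ / 2 := by rw [mul_comm, div_mul_cancel₀ _ hC₀pos.ne']
  set E : ℝ := Real.exp (-2 * κ * T₀) with hEdef
  have hEpos : 0 < E := Real.exp_pos _
  set δ₀ : ℝ := a₁ / 2 * E with hδ₀def
  have hδ₀pos : 0 < δ₀ := mul_pos (by linarith) hEpos
  set c : ℝ := a₁ / (a₁ + a₂) with hcdef
  have hcpos : 0 < c := div_pos ha₁pos (by linarith)
  have hc1 : c ≤ 1 := by
    rw [hcdef, div_le_one (show (0:ℝ) < a₁ + a₂ by linarith)]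
    linarith
  -- conclude
  refine ⟨fun θ hθ => ⟨hmono θ hθ, himg θ hθ⟩, ?_⟩
  intro τh hτh
  refine ⟨(1 / (2 * κ)) * (4 * C₀ / (a₁ ^ 2 * c)) ⊔ ((1 + 2 * κ) * C₀ * (2 / a₁) ^ 2),
    lt_of_lt_of_le (by positivity) (le_max_left _ _), max m (-δ₀),
    max_lt hmneg (by linarith), ?_⟩
  intro θ hθ x0 hx1 hx2
  set b : ℝ := -x0 with hbdef
  have hbpos : 0 < b := by rw [hbdef]; linarith
  have hx0mem : x0 ∈ Set.Ico (z 0 θ) 0 :=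
    ⟨le_trans (hzm θ hθ) ((le_max_left m (-δ₀)).trans hx1.le), hx2⟩
  obtain ⟨hτ0, hfτ⟩ := hτh θ hθ x0 hx0mem
  set τ : ℝ := τh x0 θ with hτdef
  have hAθpos : 0 < A θ := hApos θ hθ
  have hAθ₁ : a₁ ≤ A θ := ha₁ θ hθ
  have hAθ₂ : A θ ≤ a₂ := ha₂ θ hθ
  have hE4 : Real.exp (-4 * κ * T₀) = E * E := by
    rw [hEdef, ← Real.exp_add]; congr 1; ring
  -- τ > T₀
  have hτT : T₀ < τ := by
    by_contra hcon
    push_neg at hcon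
    have hm1 : z τ θ + τ ≤ z T₀ θ + T₀ :=
      (hmono θ hθ).monotoneOn hτ0 hT₀pos.le hcon
    have h2 := (hC₀ T₀ hT₀pos θ hθ).1
    rw [hE4, ← hEdef, abs_le] at h2
    have hp1 : C₀ * (E * E) ≤ a₁ / 2 * E := by
      rw [← mul_assoc]
      exact mul_le_mul_of_nonneg_right hT₀ hEpos.le
    have hp2 : a₁ * E ≤ A θ * E := mul_le_mul_of_nonneg_right hAθ₁ hEpos.le
    have hδx : -δ₀ < x0 := lt_of_le_of_lt (le_max_right m (-δ₀)) hx1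
    have hzT : z T₀ θ + T₀ ≤ -δ₀ := by
      rw [hδ₀def]
      linarith only [h2.2, hp1, hp2]
    rw [hfτ] at hm1
    linarith only [hm1, hzT, hδx]
  have hτpos : 0 < τ := hT₀pos.trans hτT
  obtain ⟨h1, h2⟩ := hC₀ τ hτpos θ hθ
  set u : ℝ := Real.exp (-2 * κ * τ) with hudef
  have hupos : 0 < u := Real.exp_pos _
  have hu4 : Real.exp (-4 * κ * τ) = u ^ 2 := by
    rw [hudef, sq, ← Real.exp_add]; congr 1; ring
  rw [hfτ, hu4] at h1
  rw [hu4] at h2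
  have huE : u ≤ E := by
    rw [hudef, hEdef]
    apply Real.exp_le_exp.2
    have h3 : 2 * κ * T₀ ≤ 2 * κ * τ :=
      mul_le_mul_of_nonneg_left hτT.le (by positivity)
    linarith
  have hCu : C₀ * u ≤ a₁ / 2 :=
    le_trans (mul_le_mul_of_nonneg_left huE hC₀pos.le) hT₀
  have hCu2 : C₀ * u ^ 2 ≤ a₁ / 2 * u := by
    have h := mul_le_mul_of_nonneg_right hCu hupos.le
    calc C₀ * u ^ 2 = C₀ * u * u := by ring
      _ ≤ a₁ / 2 * u := h
  rw [abs_le] at h1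
  have hAub : A θ * u ≤ b + C₀ * u ^ 2 := by
    have h := h1.2; rw [hbdef]; linarith only [h]
  have hAlb : b - C₀ * u ^ 2 ≤ A θ * u := by
    have h := h1.1; rw [hbdef]; linarith only [h]
  have haub : a₁ * u ≤ A θ * u := mul_le_mul_of_nonneg_right hAθ₁ hupos.le
  have haub2 : A θ * u ≤ a₂ * u := mul_le_mul_of_nonneg_right hAθ₂ hupos.le
  have hub : u ≤ 2 * b / a₁ := by
    rw [le_div_iff₀ ha₁pos]
    linarith only [hAub, haub, hCu2]
  have hlbu : b ≤ (a₁ + a₂) * u := by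
    linarith only [hAlb, haub2, hCu2, mul_nonneg ha₁pos.le hupos.le]
  have hu2b : u ^ 2 ≤ (2 / a₁) ^ 2 * b ^ 2 := by
    have h := pow_le_pow_left₀ hupos.le hub 2
    calc u ^ 2 ≤ (2 * b / a₁) ^ 2 := h
      _ = (2 / a₁) ^ 2 * b ^ 2 := by ring
  have hAu : |A θ * u - b| ≤ C₀ * u ^ 2 := by
    rw [abs_le]
    constructor
    · linarith only [hAlb]
    · linarith only [hAub]
  have hcb1 : c * b ≤ A θ * u := by
    have h : c * b ≤ a₁ * u := by
      rw [hcdef, div_mul_eq_mul_div, div_le_iff₀ (show (0:ℝ) < a₁ + a₂ by linarith)]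
      linarith only [mul_le_mul_of_nonneg_left hlbu ha₁pos.le]
    linarith
  have hcb2 : c * b ≤ b := by
    calc c * b ≤ 1 * b := mul_le_mul_of_nonneg_right hc1 hbpos.le
      _ = b := one_mul b
  have hcbpos : 0 < c * b := mul_pos hcpos hbpos
  have hAupos : 0 < A θ * u := mul_pos hAθpos hupos
  have habsx : |x0| = b := by rw [hbdef]; exact abs_of_neg hx2
  constructor
  · -- first estimate
    have hlogu : Real.log u = -2 * κ * τ := by rw [hudef, Real.log_exp]
    have hexpr : τ + 1 / (2 * κ) * Real.log b - 1 / (2 * κ) * Real.log (A θ)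
        = -(1 / (2 * κ)) * (Real.log (A θ * u) - Real.log b) := by
      rw [Real.log_mul hAθpos.ne' hupos.ne', hlogu]
      field_simp
      ring
    have hlog := log_close hAupos hbpos hcbpos hcb1 hcb2 hAu
    have hlog2 : |Real.log (A θ * u) - Real.log b| ≤ (4 * C₀ / (a₁ ^ 2 * c)) * b := by
      have hh1 : (C₀ * u ^ 2) / (c * b) ≤ (C₀ * ((2 / a₁) ^ 2 * b ^ 2)) / (c * b) :=
        div_le_div₀ (by positivity) (mul_le_mul_of_nonneg_left hu2b hC₀pos.le)
          hcbpos le_rfl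
      have hh2 : (C₀ * ((2 / a₁) ^ 2 * b ^ 2)) / (c * b)
          = (4 * C₀ / (a₁ ^ 2 * c)) * b := by
        field_simp
        ring
      calc |Real.log (A θ * u) - Real.log b| ≤ (C₀ * u ^ 2) / (c * b) := hlog
        _ ≤ (C₀ * ((2 / a₁) ^ 2 * b ^ 2)) / (c * b) := hh1
        _ = (4 * C₀ / (a₁ ^ 2 * c)) * b := hh2
    calc |τ + 1 / (2 * κ) * Real.log b - 1 / (2 * κ) * Real.log (A θ)|
        = (1 / (2 * κ)) * |Real.log (A θ * u) - Real.log b| := by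
          rw [hexpr, abs_mul, abs_neg, abs_of_pos (show (0:ℝ) < 1 / (2 * κ) by positivity)]
      _ ≤ (1 / (2 * κ)) * ((4 * C₀ / (a₁ ^ 2 * c)) * b) :=
          mul_le_mul_of_nonneg_left hlog2 (by positivity)
      _ = ((1 / (2 * κ)) * (4 * C₀ / (a₁ ^ 2 * c))) * b := by ring
      _ ≤ ((1 / (2 * κ)) * (4 * C₀ / (a₁ ^ 2 * c)) ⊔
            ((1 + 2 * κ) * C₀ * (2 / a₁) ^ 2)) * |x0| := by
          rw [habsx]
          exact mul_le_mul_of_nonneg_right (le_max_left _ _) hbpos.le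
  · -- second estimate
    rw [abs_le] at h2
    have hkey : 1 + zt τ θ + 2 * κ * x0
        = (zt τ θ + 1 - 2 * κ * A θ * u) + 2 * κ * (A θ * u - b) := by
      rw [hbdef]; ring
    have hb2 : b ^ 2 = x0 ^ 2 := by rw [hbdef]; ring
    calc |1 + zt τ θ + 2 * κ * x0|
        = |(zt τ θ + 1 - 2 * κ * A θ * u) + 2 * κ * (A θ * u - b)| := by rw [hkey]
      _ ≤ |zt τ θ + 1 - 2 * κ * A θ * u| + |2 * κ * (A θ * u - b)| := abs_add_le _ _
      _ ≤ C₀ * u ^ 2 + 2 * κ * (C₀ * u ^ 2) := by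
          refine add_le_add (abs_le.2 h2) ?_
          rw [abs_mul, abs_of_pos (show (0:ℝ) < 2 * κ by positivity)]
          exact mul_le_mul_of_nonneg_left hAu (by positivity)
      _ = (1 + 2 * κ) * (C₀ * u ^ 2) := by ring
      _ ≤ (1 + 2 * κ) * (C₀ * ((2 / a₁) ^ 2 * b ^ 2)) :=
          mul_le_mul_of_nonneg_left
            (mul_le_mul_of_nonneg_left hu2b hC₀pos.le) (by positivity)
      _ = ((1 + 2 * κ) * C₀ * (2 / a₁) ^ 2) * x0 ^ 2 := by rw [hb2]; ring
      _ ≤ ((1 / (2 * κ)) * (4 * C₀ / (a₁ ^ 2 * c)) ⊔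
            ((1 + 2 * κ) * C₀ * (2 / a₁) ^ 2)) * x0 ^ 2 :=
          mul_le_mul_of_nonneg_right (le_max_right _ _) (sq_nonneg _)


end Stmt8
end
end

section
/- Let A > 0 and κ > 0. For every ξ ∈ ℝ∖{0}: lim_{ε→0⁺} ∫_ℝ e^{−ixξ}·(ε·cosh(κx/2) − iA·sinh(κx/2))^{−1} dx = (4π/(Aκ))·(1 + e^{−2πξ/κ})^{−1}. -/
/-!
Put `ζ = ε + iA` and `w = ζ / ‖ζ‖`, so that `re w > 0` and `conj ζ * w² = ζ`. Substituting
`u = exp (κx/2)` turns `ε cosh (κx/2) - iA sinh (κx/2)` into `conj ζ (u² + w²) / (2u)`, so the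
integral is `4 / (κ conj ζ)` times the Mellin transform of `u ↦ (u² + w²)⁻¹` at
`s = 1 - 2iξ/κ`. For real `w > 0` scaling gives `w ^ (s - 2)` times the value at `w = 1`, a Beta
integral equal to `π / (2 sin (π s / 2))`; both sides are holomorphic in `w` on the right
half-plane, so the formula holds for all `w` there. The closed form is continuous in `ε` at `0`,
where `w = i`, and `i ^ (s - 2) = -i e^{πξ/κ}` produces the answer.
-/

noncomputable section
open Real MeasureTheory Filter

namespace Stmt16

open Complex ComplexConjugate Set Metric Topology

lemma re_mul_sq_add_sq_le (u : ℝ) (z : ℂ) :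
    z.re * (u ^ 2 + ‖z‖ ^ 2) ≤ ‖z‖ * ‖(u : ℂ) ^ 2 + z ^ 2‖ := by
  -- `‖z‖² ‖u² + z²‖² = (re z)² (u² + ‖z‖²)² + (im z)² (u² - ‖z‖²)²`
  have key : (z.re * (u ^ 2 + ‖z‖ ^ 2)) ^ 2 ≤ (‖z‖ * ‖(u : ℂ) ^ 2 + z ^ 2‖) ^ 2 := by
    rw [mul_pow ‖z‖, Complex.sq_norm, Complex.sq_norm, normSq_apply, normSq_apply]
    simp only [add_re, add_im, ofReal_re, ofReal_im, pow_two, mul_re, mul_im]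
    nlinarith [sq_nonneg (z.im * (u * u - z.re * z.re - z.im * z.im))]
  exact (abs_le_of_sq_le_sq' key (by positivity)).2

lemma sq_add_sq_ne_zero {z : ℂ} (hz : 0 < z.re) (u : ℝ) : (u : ℂ) ^ 2 + z ^ 2 ≠ 0 := by
  intro h
  have hle := re_mul_sq_add_sq_le u z
  rw [h, norm_zero, mul_zero] at hle
  have hz' : 0 < ‖z‖ := hz.trans_le (re_le_norm z)
  exact hle.not_gt (by positivity)

lemma norm_inv_sq_add_sq_le {z : ℂ} (hz : 0 < z.re) (u : ℝ) :
    ‖((u : ℂ) ^ 2 + z ^ 2)⁻¹‖ ≤ ‖z‖ / z.re * (u ^ 2 + z.re ^ 2)⁻¹ := by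
  have hz' : 0 < ‖z‖ := hz.trans_le (re_le_norm z)
  have hle : z.re * (u ^ 2 + z.re ^ 2) ≤ ‖z‖ * ‖(u : ℂ) ^ 2 + z ^ 2‖ := by
    refine le_trans ?_ (re_mul_sq_add_sq_le u z)
    gcongr
    exact re_le_norm z
  calc ‖((u : ℂ) ^ 2 + z ^ 2)⁻¹‖ = ‖z‖ / (‖z‖ * ‖(u : ℂ) ^ 2 + z ^ 2‖) := by
        rw [norm_inv, div_mul_eq_div_div, div_self hz'.ne', one_div]
    _ ≤ ‖z‖ / (z.re * (u ^ 2 + z.re ^ 2)) := by gcongr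
    _ = ‖z‖ / z.re * (u ^ 2 + z.re ^ 2)⁻¹ := by rw [div_mul_eq_div_div, div_eq_mul_inv]

lemma integrableOn_rpow_mul_inv_sq_add_sq {σ a : ℝ} (hσ0 : 0 < σ) (hσ2 : σ < 2) (ha : 0 < a) :
    IntegrableOn (fun u : ℝ => u ^ (σ - 1) * (u ^ 2 + a ^ 2)⁻¹) (Ioi 0) := by
  have hmeas : ∀ s : Set ℝ,
      AEStronglyMeasurable (fun u : ℝ => u ^ (σ - 1) * (u ^ 2 + a ^ 2)⁻¹) (volume.restrict s) :=
    fun s => by fun_prop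
  rw [← Ioc_union_Ioi_eq_Ioi zero_le_one]
  refine IntegrableOn.union ?_ ?_
  · refine Integrable.mono' (((intervalIntegral.intervalIntegrable_rpow' (r := σ - 1)
      (by linarith)).1).const_mul (a ^ 2)⁻¹) (hmeas _) ?_
    refine (ae_restrict_iff' measurableSet_Ioc).2 (Eventually.of_forall fun u hu => ?_)
    rw [norm_mul, norm_inv, Real.norm_of_nonneg (rpow_nonneg hu.1.le _), mul_comm,
      Real.norm_of_nonneg (by positivity)]
    gcongr
    exacts [rpow_nonneg hu.1.le _, by nlinarith]
  · refine Integrable.mono' (integrableOn_Ioi_rpow_of_lt (a := σ - 3) (by linarith) zero_lt_one)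
      (hmeas _) ?_
    refine (ae_restrict_iff' measurableSet_Ioi).2 (Eventually.of_forall fun u (hu : 1 < u) => ?_)
    have hu0 : 0 < u := zero_lt_one.trans hu
    rw [norm_mul, norm_inv, Real.norm_of_nonneg (rpow_nonneg hu0.le _),
      Real.norm_of_nonneg (by positivity), show σ - 3 = (σ - 1) + (-2 : ℤ) by push_cast; ring,
      rpow_add_intCast hu0.ne', zpow_neg, zpow_two, ← pow_two]
    gcongr
    nlinarith

lemma norm_cpow_sub_one_smul_inv_sq_add_sq_le (s : ℂ) {z : ℂ} (hz : 0 < z.re) {u : ℝ}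
    (hu : 0 < u) :
    ‖(u : ℂ) ^ (s - 1) • ((u : ℂ) ^ 2 + z ^ 2)⁻¹‖
      ≤ ‖z‖ / z.re * (u ^ (s.re - 1) * (u ^ 2 + z.re ^ 2)⁻¹) := by
  rw [norm_smul, norm_cpow_eq_rpow_re_of_pos hu, sub_re, one_re, mul_left_comm]
  gcongr
  exact norm_inv_sq_add_sq_le hz u

lemma norm_cpow_sub_one_smul_deriv_inv_sq_add_sq_le (s : ℂ) {a M : ℝ} (ha : 0 < a) {z : ℂ}
    (hza : a ≤ z.re) (hzM : ‖z‖ ≤ M) {u : ℝ} (hu : 0 < u) :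
    ‖(u : ℂ) ^ (s - 1) • (-(2 * z) / ((u : ℂ) ^ 2 + z ^ 2) ^ 2)‖
      ≤ 2 * M * (M / a) ^ 2 / a ^ 2 * (u ^ (s.re - 1) * (u ^ 2 + a ^ 2)⁻¹) := by
  have hM : 0 ≤ M := (norm_nonneg z).trans hzM
  have hN : ‖((u : ℂ) ^ 2 + z ^ 2)⁻¹‖ ≤ M / a * (u ^ 2 + a ^ 2)⁻¹ :=
    (norm_inv_sq_add_sq_le (ha.trans_le hza) u).trans (by gcongr)
  have hN2 : ‖((u : ℂ) ^ 2 + z ^ 2)⁻¹‖ ^ 2 ≤ (M / a) ^ 2 / a ^ 2 * (u ^ 2 + a ^ 2)⁻¹ :=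
    calc _ ≤ (M / a * (u ^ 2 + a ^ 2)⁻¹) ^ 2 := by gcongr
      _ = (M / a) ^ 2 * (u ^ 2 + a ^ 2)⁻¹ * (u ^ 2 + a ^ 2)⁻¹ := by ring
      _ ≤ (M / a) ^ 2 * (u ^ 2 + a ^ 2)⁻¹ * (a ^ 2)⁻¹ := by
        gcongr
        nlinarith
      _ = _ := by ring
  rw [norm_smul, norm_cpow_eq_rpow_re_of_pos hu, div_eq_mul_inv, ← inv_pow, norm_mul, norm_neg,
    norm_mul, norm_pow, Complex.norm_two, sub_re, one_re]
  calc _ ≤ u ^ (s.re - 1) * (2 * M * ((M / a) ^ 2 / a ^ 2 * (u ^ 2 + a ^ 2)⁻¹)) := by gcongr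
    _ = _ := by ring

lemma mellinConvergent_inv_sq_add_sq {w s : ℂ} (hw : 0 < w.re) (hs0 : 0 < s.re)
    (hs2 : s.re < 2) : MellinConvergent (fun u : ℝ => ((u : ℂ) ^ 2 + w ^ 2)⁻¹) s :=
  Integrable.mono' ((integrableOn_rpow_mul_inv_sq_add_sq hs0 hs2 hw).const_mul (‖w‖ / w.re))
    (by fun_prop) <| (ae_restrict_iff' measurableSet_Ioi).2 <|
      Eventually.of_forall fun _ hu => norm_cpow_sub_one_smul_inv_sq_add_sq_le s hw hu

lemma differentiableOn_mellin_inv_sq_add_sq {s : ℂ} (hs0 : 0 < s.re) (hs2 : s.re < 2) :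
    DifferentiableOn ℂ (fun w : ℂ => mellin (fun u : ℝ => ((u : ℂ) ^ 2 + w ^ 2)⁻¹) s)
      {w | 0 < w.re} := by
  intro w (hw : 0 < w.re)
  set a := w.re / 2 with ha_def
  set M := ‖w‖ + a
  have ha : 0 < a := half_pos hw
  have hball : ∀ z ∈ ball w a, a ≤ z.re ∧ ‖z‖ ≤ M := fun z hz => by
    have hzw : ‖z - w‖ < a := mem_ball_iff_norm.1 hz
    have hre := (abs_le.1 ((abs_re_le_norm (z - w)).trans hzw.le)).1
    rw [sub_re] at hre
    have : a + a = w.re := by rw [ha_def]; ring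
    exact ⟨by linarith, by linarith [norm_le_norm_add_norm_sub' z w]⟩
  refine (hasDerivAt_integral_of_dominated_loc_of_deriv_le (μ := volume.restrict (Ioi 0))
    (F := fun z (u : ℝ) => (u : ℂ) ^ (s - 1) • ((u : ℂ) ^ 2 + z ^ 2)⁻¹)
    (F' := fun z (u : ℝ) => (u : ℂ) ^ (s - 1) • (-(2 * z) / ((u : ℂ) ^ 2 + z ^ 2) ^ 2))
    (bound := fun u => 2 * M * (M / a) ^ 2 / a ^ 2 * (u ^ (s.re - 1) * (u ^ 2 + a ^ 2)⁻¹))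
    (ball_mem_nhds w ha) (Eventually.of_forall fun z => by fun_prop)
    (mellinConvergent_inv_sq_add_sq hw hs0 hs2) (by fun_prop) ?_
    ((integrableOn_rpow_mul_inv_sq_add_sq hs0 hs2 ha).const_mul _) ?_).2.differentiableAt
    |>.differentiableWithinAt
  · refine (ae_restrict_iff' measurableSet_Ioi).2 (Eventually.of_forall fun u hu z hz => ?_)
    exact norm_cpow_sub_one_smul_deriv_inv_sq_add_sq_le s ha (hball z hz).1 (hball z hz).2 hu
  · refine (ae_restrict_iff' measurableSet_Ioi).2 (Eventually.of_forall fun u _ z hz => ?_)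
    have hD : HasDerivAt (fun z : ℂ => (u : ℂ) ^ 2 + z ^ 2) (2 * z) z := by
      simpa using (hasDerivAt_pow 2 z).const_add ((u : ℂ) ^ 2)
    exact (hD.inv (sq_add_sq_ne_zero (ha.trans_le (hball z hz).1) u)).const_mul _

lemma mellin_inv_sq_add_sq_ofReal (s : ℂ) {t : ℝ} (ht : 0 < t) :
    mellin (fun u : ℝ => ((u : ℂ) ^ 2 + (t : ℂ) ^ 2)⁻¹) s
      = (t : ℂ) ^ (s - 2) * mellin (fun u : ℝ => ((u : ℂ) ^ 2 + 1)⁻¹) s := by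
  have htC : (t : ℂ) ≠ 0 := ofReal_ne_zero.2 ht.ne'
  have h := mellin_comp_mul_left (fun u : ℝ => ((u : ℂ) ^ 2 + (t : ℂ) ^ 2)⁻¹) s ht
  have hcomp : (fun u : ℝ => (((t * u : ℝ) : ℂ) ^ 2 + (t : ℂ) ^ 2)⁻¹)
      = fun u : ℝ => ((u : ℂ) ^ 2 + 1)⁻¹ / (t : ℂ) ^ 2 := funext fun u => by
    rw [ofReal_mul, show ((t : ℂ) * u) ^ 2 + (t : ℂ) ^ 2 = ((u : ℂ) ^ 2 + 1) * (t : ℂ) ^ 2 by ring,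
      mul_inv, div_eq_mul_inv]
  rw [hcomp, mellin_div_const, smul_eq_mul, cpow_neg] at h
  rw [cpow_sub _ _ htC, cpow_two, div_mul_eq_mul_div, mul_div_assoc, h,
    mul_inv_cancel_left₀ (cpow_ne_zero_iff.2 (Or.inl htC))]

lemma image_div_one_add_Ioi : (fun v : ℝ => v / (1 + v)) '' Ioi 0 = Ioo 0 1 := by
  ext x
  constructor
  · rintro ⟨v, hv : 0 < v, rfl⟩
    exact ⟨by positivity, (div_lt_one (by positivity)).2 (by linarith)⟩
  · rintro ⟨hx0, hx1⟩
    refine ⟨x / (1 - x), div_pos hx0 (by linarith), ?_⟩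
    have : 1 - x ≠ 0 := by linarith
    field_simp
    ring

lemma mellin_inv_one_add {σ : ℂ} (h0 : 0 < σ.re) (h1 : σ.re < 1) :
    mellin (fun v : ℝ => (1 + (v : ℂ))⁻¹) σ = π / Complex.sin (π * σ) := by
  have hderiv : ∀ v ∈ Ioi (0 : ℝ), HasDerivWithinAt (fun v : ℝ => v / (1 + v))
      (1 / (1 + v) ^ 2) (Ioi 0) v := fun v (hv : 0 < v) => by
    have := (hasDerivAt_id v).div ((hasDerivAt_id v).const_add 1) (by simp; linarith)
    refine (this.congr_deriv ?_).hasDerivWithinAt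
    simp only [id]
    ring
  have hinj : InjOn (fun v : ℝ => v / (1 + v)) (Ioi 0) := fun a (ha : 0 < a) b (hb : 0 < b) h => by
    field_simp at h
    linarith
  -- the substitution `x = v / (1 + v)` in `B(σ, 1 - σ) = Γ(σ) Γ(1 - σ)`
  rw [← Complex.Gamma_mul_Gamma_one_sub, Complex.Gamma_mul_Gamma_eq_betaIntegral h0
    (by simpa using h1), add_sub_cancel, Complex.Gamma_one, one_mul, betaIntegral,
    intervalIntegral.integral_of_le zero_le_one, integral_Ioc_eq_integral_Ioo,
    ← image_div_one_add_Ioi, integral_image_eq_integral_abs_deriv_smul measurableSet_Ioi hderiv hinj]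
  refine setIntegral_congr_fun measurableSet_Ioi fun v (hv : 0 < v) => ?_
  have hp : 0 < 1 + v := by linarith
  have hpC : ((1 + v : ℝ) : ℂ) ≠ 0 := ofReal_ne_zero.2 hp.ne'
  have hcompl : (1 : ℂ) - ((v / (1 + v) : ℝ) : ℂ) = ((1 + v : ℝ) : ℂ)⁻¹ := by
    rw [← ofReal_one, ← ofReal_sub, ← ofReal_inv]
    congr 1
    field_simp
    ring
  rw [hcompl, ofReal_div, div_cpow_ofReal_nonneg hv.le hp.le, inv_cpow_ofReal_nonneg hp.le,
    show 1 - σ - 1 = -σ by ring, cpow_neg, inv_inv, cpow_sub _ _ hpC, cpow_one,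
    abs_of_pos (by positivity), real_smul, smul_eq_mul]
  have : ((1 + v : ℝ) : ℂ) ^ σ ≠ 0 := cpow_ne_zero_iff.2 (Or.inl hpC)
  push_cast at hpC this ⊢
  field_simp

lemma mellin_inv_sq_add_one {s : ℂ} (hs0 : 0 < s.re) (hs2 : s.re < 2) :
    mellin (fun u : ℝ => ((u : ℂ) ^ 2 + 1)⁻¹) s = π / (2 * Complex.sin (π * s / 2)) := by
  have h := mellin_comp_rpow (fun v : ℝ => (1 + (v : ℂ))⁻¹) s 2
  have hsq : (fun u : ℝ => (1 + ((u ^ (2 : ℝ) : ℝ) : ℂ))⁻¹) = fun u : ℝ => ((u : ℂ) ^ 2 + 1)⁻¹ :=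
    funext fun u => by rw [rpow_two, ofReal_pow, add_comm]
  rw [hsq, mellin_inv_one_add (by simpa using hs0) (by simpa using by linarith)] at h
  rw [h, abs_two, Complex.real_smul, mul_div_assoc', ofReal_inv, ofReal_ofNat, mul_div_assoc']
  field_simp

theorem mellin_inv_sq_add_sq {w s : ℂ} (hw : 0 < w.re) (hs0 : 0 < s.re) (hs2 : s.re < 2) :
    mellin (fun u : ℝ => ((u : ℂ) ^ 2 + w ^ 2)⁻¹) s
      = w ^ (s - 2) * (π / (2 * Complex.sin (π * s / 2))) := by
  have hU : IsOpen {z : ℂ | 0 < z.re} := isOpen_lt continuous_const continuous_re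
  have hG := (differentiableOn_mellin_inv_sq_add_sq hs0 hs2).analyticOnNhd hU
  have hH : AnalyticOnNhd ℂ (fun z : ℂ => z ^ (s - 2) * (π / (2 * Complex.sin (π * s / 2))))
      {z | 0 < z.re} :=
    DifferentiableOn.analyticOnNhd (fun z (hz : 0 < z.re) =>
      ((differentiableAt_id.cpow_const (Or.inl hz)).mul_const _).differentiableWithinAt) hU
  have hreal : ∀ᶠ t : ℝ in 𝓝[≠] 1, mellin (fun u : ℝ => ((u : ℂ) ^ 2 + (t : ℂ) ^ 2)⁻¹) s
      = (t : ℂ) ^ (s - 2) * (π / (2 * Complex.sin (π * s / 2))) :=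
    (eventually_gt_nhds one_pos).filter_mono nhdsWithin_le_nhds |>.mono fun t ht => by
      rw [mellin_inv_sq_add_sq_ofReal s ht, mellin_inv_sq_add_one hs0 hs2]
  have hmap : Tendsto ((↑) : ℝ → ℂ) (𝓝[≠] 1) (𝓝[≠] 1) := by
    have := continuous_ofReal.continuousWithinAt.tendsto_nhdsWithin (x := (1 : ℝ))
      (t := {1}ᶜ) (fun t (ht : t ≠ 1) => (ofReal_ne_one.2 ht : (t : ℂ) ≠ 1))
    rwa [ofReal_one] at this
  exact hG.eqOn_of_preconnected_of_frequently_eq hH (convex_halfSpace_re_gt 0).isPreconnected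
    (show (0 : ℝ) < (1 : ℂ).re by simp) (hmap.frequently hreal.frequently) hw

lemma mellin_eq_integral_exp {E : Type*} [NormedAddCommGroup E] [NormedSpace ℂ E] (f : ℝ → E)
    (s : ℂ) : mellin f s = ∫ x : ℝ, cexp (s * x) • f (rexp x) := by
  rw [mellin, ← Real.range_exp, ← image_univ, integral_image_eq_integral_abs_deriv_smul
    MeasurableSet.univ (fun x _ => (Real.hasDerivAt_exp x).hasDerivWithinAt)
    Real.exp_injective.injOn, setIntegral_univ]
  refine integral_congr_ae (Eventually.of_forall fun x => ?_)
  dsimp only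
  rw [abs_of_pos (exp_pos x), ← Complex.coe_smul, smul_smul, cpow_def_of_ne_zero
    (ofReal_ne_zero.2 (exp_pos x).ne'), ← ofReal_log (exp_pos x).le, Real.log_exp, ofReal_exp,
    ← Complex.exp_add]
  ring_nf

lemma conj_mul_div_norm_sq (ζ : ℂ) : conj ζ * (ζ / ‖ζ‖) ^ 2 = ζ := by
  rcases eq_or_ne ζ 0 with rfl | hζ
  · simp
  have hn : (‖ζ‖ : ℂ) ≠ 0 := ofReal_ne_zero.2 (norm_ne_zero_iff.2 hζ)
  rw [div_pow, mul_div_assoc', div_eq_iff (pow_ne_zero 2 hn), sq, ← mul_assoc, mul_comm (conj ζ),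
    mul_conj, normSq_eq_norm_sq, ofReal_pow, sq]
  ring

lemma sin_pi_mul_one_sub_mul_I_div_two (ω : ℂ) :
    Complex.sin (π * (1 - ω * I) / 2) = Complex.cosh (π * ω / 2) := by
  rw [show (π : ℂ) * (1 - ω * I) / 2 = π / 2 - π * ω / 2 * I by ring, Complex.sin_pi_div_two_sub,
    cos_mul_I]

lemma exp_mul_inv_cosh_sub_sinh {κ : ℝ} (hκ : κ ≠ 0) {ε A : ℝ} (hε : 0 < ε) {w : ℂ}
    (hw : 0 < w.re) (hzw : ((ε : ℂ) - A * I) * w ^ 2 = ε + A * I) (ξ x : ℝ) :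
    cexp (-I * x * ξ) * ((ε : ℂ) * Complex.cosh (κ * x / 2) - I * A * Complex.sinh (κ * x / 2))⁻¹
      = 2 / ((ε : ℂ) - A * I) * (cexp ((1 - (2 * ξ / κ : ℝ) * I) * ↑(κ / 2 * x))
          • ((rexp (κ / 2 * x) : ℂ) ^ 2 + w ^ 2)⁻¹) := by
  set E := cexp (κ * x / 2)
  have hE0 : E ≠ 0 := Complex.exp_ne_zero _
  have hexp : ((rexp (κ / 2 * x) : ℝ) : ℂ) = E := by rw [ofReal_exp]; congr 1; push_cast; ring
  have hsE : cexp ((1 - (2 * ξ / κ : ℝ) * I) * ↑(κ / 2 * x)) = E * cexp (-I * x * ξ) := by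
    have hκC : (κ : ℂ) ≠ 0 := ofReal_ne_zero.2 hκ
    rw [← Complex.exp_add]
    congr 1
    push_cast
    field_simp
    ring
  have hD := sq_add_sq_ne_zero hw (rexp (κ / 2 * x))
  rw [hexp] at hD
  have hz : (ε : ℂ) - A * I ≠ 0 := fun h => by simpa [hε.ne'] using congrArg re h
  have hden : (ε : ℂ) * Complex.cosh (κ * x / 2) - I * A * Complex.sinh (κ * x / 2)
      = ((ε : ℂ) - A * I) * (E ^ 2 + w ^ 2) / (2 * E) := by
    rw [Complex.cosh, Complex.sinh, Complex.exp_neg, mul_add, hzw]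
    field_simp
    ring
  rw [hexp, hsE, hden, smul_eq_mul, inv_div]
  field_simp

def thermalClosedForm (A κ ξ ε : ℝ) : ℂ :=
  4 / κ * ((ε : ℂ) - A * I)⁻¹ * (((ε : ℂ) + A * I) / ‖(ε : ℂ) + A * I‖) ^ (-1 - (2 * ξ / κ : ℝ) * I)
    * (π / (2 * Complex.cosh (π * ξ / κ)))

lemma integral_eq_thermalClosedForm {κ : ℝ} (hκ : 0 < κ) (A ξ : ℝ) {ε : ℝ} (hε : 0 < ε) :
    ∫ x : ℝ, cexp (-I * x * ξ) * ((ε : ℂ) * Complex.cosh (κ * x / 2)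
      - I * A * Complex.sinh (κ * x / 2))⁻¹ = thermalClosedForm A κ ξ ε := by
  set ζ : ℂ := ε + A * I
  set w : ℂ := ζ / ‖ζ‖
  set s : ℂ := 1 - (2 * ξ / κ : ℝ) * I
  have hw : 0 < w.re := by
    have hζ : ζ ≠ 0 := fun h => by simpa [ζ, hε.ne'] using congrArg re h
    simp only [w, div_ofReal_re]
    exact div_pos (by simpa [ζ] using hε) (norm_pos_iff.2 hζ)
  have hzw : ((ε : ℂ) - A * I) * w ^ 2 = ζ := by
    simpa [ζ, map_add, conj_ofReal, sub_eq_add_neg] using conj_mul_div_norm_sq ζ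
  rw [integral_congr_ae (Eventually.of_forall (exp_mul_inv_cosh_sub_sinh hκ.ne' hε hw hzw ξ)),
    integral_const_mul,
    Measure.integral_comp_mul_left (fun y : ℝ => cexp (s * y) • ((rexp y : ℂ) ^ 2 + w ^ 2)⁻¹),
    ← mellin_eq_integral_exp (fun u : ℝ => ((u : ℂ) ^ 2 + w ^ 2)⁻¹),
    mellin_inv_sq_add_sq hw (by simp [s]) (by simp [s]), thermalClosedForm,
    abs_of_pos (by positivity), Complex.real_smul,
    show s - 2 = -1 - ((2 * ξ / κ : ℝ) : ℂ) * I by ring, sin_pi_mul_one_sub_mul_I_div_two,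
    show (π : ℂ) * ((2 * ξ / κ : ℝ) : ℂ) / 2 = π * ξ / κ by push_cast; field_simp]
  push_cast
  ring

lemma continuousAt_thermalClosedForm {A : ℝ} (hA : A ≠ 0) (κ ξ : ℝ) :
    ContinuousAt (thermalClosedForm A κ ξ) 0 := by
  have hAI : ((0 : ℝ) : ℂ) + A * I ≠ 0 := by simpa using hA
  have hslit : (((0 : ℝ) : ℂ) + A * I) / ‖((0 : ℝ) : ℂ) + A * I‖ ∈ slitPlane :=
    mem_slitPlane_iff.2 (Or.inr (by simpa [div_ofReal_im] using hA))
  have hbase : ContinuousAt (fun ε : ℝ => ((ε : ℂ) + A * I) / ‖(ε : ℂ) + A * I‖) 0 :=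
    (by fun_prop : ContinuousAt (fun ε : ℝ => (ε : ℂ) + A * I) 0).div (by fun_prop)
      (ofReal_ne_zero.2 (norm_ne_zero_iff.2 hAI))
  have hinv : ContinuousAt (fun ε : ℝ => ((ε : ℂ) - A * I)⁻¹) 0 :=
    (by fun_prop : ContinuousAt (fun ε : ℝ => (ε : ℂ) - A * I) 0).inv₀ (by simpa using hA)
  exact ((continuousAt_const.mul hinv).mul (hbase.cpow continuousAt_const hslit)).mul
    continuousAt_const

lemma thermalClosedForm_zero {A κ : ℝ} (hA : 0 < A) (hκ : κ ≠ 0) (ξ : ℝ) :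
    thermalClosedForm A κ ξ 0
      = (((4 * π / (A * κ)) * (1 + rexp (-2 * π * ξ / κ))⁻¹ : ℝ) : ℂ) := by
  have hAC : (A : ℂ) ≠ 0 := ofReal_ne_zero.2 hA.ne'
  have hκC : (κ : ℂ) ≠ 0 := ofReal_ne_zero.2 hκ
  have hbase : (((0 : ℝ) : ℂ) + A * I) / ‖((0 : ℝ) : ℂ) + A * I‖ = I := by
    rw [show ‖((0 : ℝ) : ℂ) + A * I‖ = A by simp [abs_of_pos hA]]
    field_simp
    simp
  have hpow : I ^ (-1 - ((2 * ξ / κ : ℝ) : ℂ) * I) = rexp (π * ξ / κ) / I := by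
    rw [cpow_def_of_ne_zero I_ne_zero, log_I,
      show ↑π / 2 * I * (-1 - ((2 * ξ / κ : ℝ) : ℂ) * I) = ((π * ξ / κ : ℝ) : ℂ) - π / 2 * I by
        push_cast
        linear_combination (-(π : ℂ) * ξ / κ) * I_sq,
      Complex.exp_sub, exp_pi_div_two_mul_I, ofReal_exp]
  have hexp : rexp (-2 * π * ξ / κ) = (rexp (π * ξ / κ))⁻¹ ^ 2 := by
    rw [← Real.exp_neg, ← Real.exp_nat_mul]
    ring_nf
  rw [thermalClosedForm, hbase, hpow, hexp, show (π : ℂ) * ξ / κ = ((π * ξ / κ : ℝ) : ℂ) by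
    push_cast; ring, ← ofReal_cosh, Real.cosh_eq, Real.exp_neg]
  have he := exp_pos (π * ξ / κ)
  generalize rexp (π * ξ / κ) = e at he ⊢
  have heC : (e : ℂ) ≠ 0 := ofReal_ne_zero.2 he.ne'
  have he2 : (e : ℂ) ^ 2 + 1 ≠ 0 := by exact_mod_cast (by positivity : e ^ 2 + 1 ≠ 0)
  push_cast
  field_simp
  linear_combination (A : ℂ) * I_sq

theorem thermal_fourier_limit (A κ : ℝ) (hA : 0 < A) (hκ : 0 < κ) :
    ∀ ξ : ℝ, ξ ≠ 0 →
      Tendsto (fun ε : ℝ =>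
          ∫ x : ℝ, Complex.exp (-Complex.I * x * ξ) *
            ((ε : ℂ) * Complex.cosh (κ * x / 2)
              - Complex.I * A * Complex.sinh (κ * x / 2))⁻¹)
        (nhdsWithin 0 (Set.Ioi 0))
        (nhds (((4 * Real.pi / (A * κ)) *
          (1 + Real.exp (-2 * Real.pi * ξ / κ))⁻¹ : ℝ) : ℂ)) := by
  intro ξ _
  have hlim := (continuousAt_thermalClosedForm hA.ne' κ ξ).tendsto.mono_left
    (nhdsWithin_le_nhds (s := Ioi 0))
  rw [thermalClosedForm_zero hA hκ.ne'] at hlim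
  exact hlim.congr' (eventually_nhdsWithin_of_forall fun ε hε =>
    (integral_eq_thermalClosedForm hκ A ξ hε).symm)

end Stmt16
end
end
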